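/- Over the alphabet Σ = {a, b}, let P be the regular spanner on the single variable x that on every document of the form a^i b a^j (with i, j ≥ 0) captures exactly the two mappings x ↦ [0, i⟩ and x ↦ [i+1, i+j+1⟩, and captures no mapping on any other document. Then the skyline of P under the span length domination relation (the spanner that on a^i b a^j keeps only the mapping(s) assigning x to a longest of these two spans, and captures nothing elsewhere) is not a regular spanner. -/

import Mathlib

/-!
If a sequential VA with state set `Q` defined the skyline, then on `a^N b a^(N+1)`, with
`N = 2^|Q|`, it would accept a ref-word for the longer span `x ↦ [N+1, 2N+2⟩`. No marker can
be read before the `(N+1)`-st letter, so this ref-word starts with `a^N`, and pumping inside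
that block (the NFA pumping lemma, whose bound is the number of subsets of `Q`) gives an
accepted ref-word for `a^(N+k) b a^(N+1)` capturing `x ↦ [N+k+1, 2N+k+2⟩`. There the span
`[0, N+k⟩` is at least as long, so that mapping is not in the skyline.
-/
namespace DocSpanners

/-- A span: a pair of endpoint positions `[i, j⟩`. -/
abbrev Span : Type := ℕ × ℕ

/-- `s` is a span of document `d`. -/
def IsSpanOf {α : Type} (d : List α) (s : Span) : Prop :=
  s.1 ≤ s.2 ∧ s.2 ≤ d.length

/-- A (schemaless) mapping over variable type `V`: a partial assignment of spans. -/
abbrev Mapping (V : Type) : Type := V → Option Span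

/-- `m` is a mapping of document `d`. -/
def MappingOf {α V : Type} (d : List α) (m : Mapping V) : Prop :=
  ∀ x s, m x = some s → IsSpanOf d s

/-- A spanner: maps documents to sets of mappings. -/
abbrev Spanner (α V : Type) : Type := List α → Set (Mapping V)

/-- Labels of a variable-set automaton: letters and variable markers. -/
inductive Label (α V : Type) : Type where
  | letter (a : α)
  | vopen (x : V)
  | vclose (x : V)
deriving DecidableEq

/-- The sequence of letters of a ref-word. -/
def letters {α V : Type} (w : List (Label α V)) : List α :=
  w.filterMap fun l => match l with
    | Label.letter a => some a
    | _ => none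

/-- A ref-word is valid if for each variable, either its markers do not appear, or
the opening and closing markers appear exactly once with the opening first. -/
def ValidRef {α V : Type} [DecidableEq α] [DecidableEq V] (w : List (Label α V)) : Prop :=
  ∀ x : V,
    (Label.vopen x ∉ w ∧ Label.vclose x ∉ w) ∨
    (w.count (Label.vopen x) = 1 ∧ w.count (Label.vclose x) = 1 ∧
      w.idxOf (Label.vopen x) < w.idxOf (Label.vclose x))

/-- The mapping defined by a (valid) ref-word: each marked variable is sent to the
span delimited by the positions at which its markers are read. -/
def refMapping {α V : Type} [DecidableEq α] [DecidableEq V] (w : List (Label α V)) :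
    Mapping V := fun x =>
  if Label.vopen x ∈ w then
    some ((letters (w.take (w.idxOf (Label.vopen x)))).length,
          (letters (w.take (w.idxOf (Label.vclose x)))).length)
  else none

/-- A variable-set automaton with state type `Q`. -/
structure VA (α V Q : Type) : Type where
  init : Q
  final : Set Q
  trans : Q → Label α V → Q → Prop

/-- Paths in a VA. -/
inductive VA.Path {α V Q : Type} (A : VA α V Q) : Q → List (Label α V) → Q → Prop where
  | nil (q : Q) : VA.Path A q [] q
  | cons {q q' q'' : Q} {l : Label α V} {w : List (Label α V)} :
      A.trans q l q' → VA.Path A q' w q'' → VA.Path A q (l :: w) q''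

/-- The VA accepts the ref-word `w` (an accepting run reads `w`). -/
def VA.AcceptsRef {α V Q : Type} (A : VA α V Q) (w : List (Label α V)) : Prop :=
  ∃ qf ∈ A.final, A.Path A.init w qf

/-- A VA is sequential if every accepting run is valid. -/
def VA.Sequential {α V Q : Type} [DecidableEq α] [DecidableEq V] (A : VA α V Q) : Prop :=
  ∀ w, A.AcceptsRef w → ValidRef w

/-- The spanner defined by a (sequential) VA. -/
def VA.spanner {α V Q : Type} [DecidableEq α] [DecidableEq V] (A : VA α V Q) :
    Spanner α V := fun d =>
  {m | ∃ w, A.AcceptsRef w ∧ letters w = d ∧ refMapping w = m}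

/-- A spanner is regular if it is defined by some sequential VA with finitely many states. -/
def IsRegular {α V : Type} [DecidableEq α] [DecidableEq V] (P : Spanner α V) : Prop :=
  ∃ (Q : Type) (_ : Fintype Q) (A : VA α V Q), A.Sequential ∧ A.spanner = P

/-- The skyline operator: keep only the mappings of `P d` that are maximal under `R d`. -/
def skyline {α V : Type} (P : Spanner α V)
    (R : List α → Mapping V → Mapping V → Prop) : Spanner α V := fun d =>
  {m | m ∈ P d ∧ ∀ m' ∈ P d, m' ≠ m → ¬ R d m m'}

/-- The variable inclusion domination relation: `m2` extends `m1`. -/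
def varIncRel {V : Type} (m1 m2 : Mapping V) : Prop :=
  ∀ x s, m1 x = some s → m2 x = some s

/-- Two mappings have the same domain. -/
def sameDom {V : Type} (m1 m2 : Mapping V) : Prop :=
  ∀ x, m1 x = none ↔ m2 x = none

/-- The span inclusion domination relation. -/
def spanIncRel {V : Type} (m1 m2 : Mapping V) : Prop :=
  sameDom m1 m2 ∧
    ∀ x s1 s2, m1 x = some s1 → m2 x = some s2 → s2.1 ≤ s1.1 ∧ s1.2 ≤ s2.2

/-- The left-to-right domination relation: same start, `m2` no shorter. -/
def ltrRel {V : Type} (m1 m2 : Mapping V) : Prop :=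
  sameDom m1 m2 ∧
    ∀ x s1 s2, m1 x = some s1 → m2 x = some s2 →
      s1.1 = s2.1 ∧ s1.2 - s1.1 ≤ s2.2 - s2.1

/-- The span length domination relation: `m2`'s spans are no shorter. -/
def spanLenRel {V : Type} (m1 m2 : Mapping V) : Prop :=
  sameDom m1 m2 ∧
    ∀ x s1 s2, m1 x = some s1 → m2 x = some s2 → s1.2 - s1.1 ≤ s2.2 - s2.1


/-- The spanner on one variable (alphabet `Bool` with `a := false`, `b := true`) that on
every document `a^i b a^j` extracts exactly the mappings `x ↦ [0, i⟩` and
`x ↦ [i+1, i+j+1⟩`, and nothing on other documents. -/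
def stmt3Spanner : Spanner Bool Unit := fun d =>
  {m | ∃ i j : ℕ,
        d = List.replicate i false ++ true :: List.replicate j false ∧
        (m () = some (0, i) ∨ m () = some (i + 1, i + j + 1))}

section RefWords

variable {α V : Type}

@[simp]
lemma letters_append (u v : List (Label α V)) : letters (u ++ v) = letters u ++ letters v :=
  List.filterMap_append

@[simp]
lemma letters_map_letter (p : List α) : letters (p.map (Label.letter (V := V))) = p := by
  simp [letters, List.filterMap_map]

lemma length_letters_le (u : List (Label α V)) : (letters u).length ≤ u.length :=
  List.length_filterMap_le _ _

lemma map_letter_letters {u : List (Label α V)}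
    (hu : ∀ x, Label.vopen x ∉ u ∧ Label.vclose x ∉ u) :
    (letters u).map Label.letter = u := by
  induction u with
  | nil => rfl
  | cons l u ih =>
    simp only [List.mem_cons, not_or] at hu
    cases l with
    | letter c => simpa [letters] using ih fun x => ⟨(hu x).1.2, (hu x).2.2⟩
    | vopen x => exact absurd rfl (hu x).1.1
    | vclose x => exact absurd rfl (hu x).2.1

variable [DecidableEq α] [DecidableEq V]

lemma notMem_take_of_le_length_letters {w : List (Label α V)} {l : Label α V} {k : ℕ}
    (h : k ≤ (letters (w.take (w.idxOf l))).length) : l ∉ w.take k := by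
  intro hl
  have hidx := (List.mem_take_iff_idxOf_lt (List.mem_of_mem_take hl)).1 hl
  have := (length_letters_le _).trans (List.length_take_le (w.idxOf l) w)
  omega

lemma refMapping_map_letter_append (p : List α) (w : List (Label α V)) :
    refMapping (p.map Label.letter ++ w) = fun x =>
      (refMapping w x).map fun s => (s.1 + p.length, s.2 + p.length) := by
  funext x
  have htake (i : ℕ) : (p.map Label.letter ++ w).take (p.length + i) =
      p.map Label.letter ++ w.take i := by
    simpa using List.take_length_add_append (l₁ := p.map Label.letter) (l₂ := w) i
  simp [refMapping, List.idxOf_append_of_notMem, htake, add_comm]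

end RefWords

lemma eq_replicate_letter_append_of_refMapping {α : Type} [DecidableEq α]
    {w : List (Label α Unit)} {s e k : ℕ} {c : α}
    (hw : refMapping w () = some (s, e)) (hks : k ≤ s) (hke : k ≤ e)
    (hlet : (letters w).take k = List.replicate k c) :
    w = List.replicate k (Label.letter c) ++ w.drop k := by
  unfold refMapping at hw
  split_ifs at hw with hopen
  obtain ⟨hs, he⟩ := Prod.mk.inj (Option.some.inj hw)
  have hprefix : (letters (w.take k)).map Label.letter = w.take k := by
    refine map_letter_letters fun _ => ⟨?_, ?_⟩
    · exact notMem_take_of_le_length_letters (hs ▸ hks)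
    · exact notMem_take_of_le_length_letters (he ▸ hke)
  have hk : k ≤ w.length :=
    (hs ▸ hks).trans ((length_letters_le _).trans (List.length_take_le' _ _))
  have hlen : (letters (w.take k)).length = k := by
    simpa [hk] using congrArg List.length hprefix
  have hletk : letters (w.take k) = List.replicate k c := by
    rw [← hlet]
    conv_rhs => rw [← List.take_append_drop k w, letters_append, List.take_left' hlen]
  conv_lhs => rw [← List.take_append_drop k w, ← hprefix, hletk, List.map_replicate]

namespace VA

variable {α V Q : Type}

def toNFA (A : VA α V Q) : NFA (Label α V) Q where
  step q l := {q' | A.trans q l q'}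
  start := {A.init}
  accept := A.final

lemma path_iff_mem_evalFrom {A : VA α V Q} {q q' : Q} {w : List (Label α V)} :
    A.Path q w q' ↔ q' ∈ A.toNFA.evalFrom {q} w := by
  induction w generalizing q with
  | nil =>
    refine ⟨fun h => by cases h; rfl, fun h => ?_⟩
    rw [NFA.evalFrom_nil, Set.mem_singleton_iff] at h
    exact h ▸ Path.nil (A := A) q
  | cons l w ih =>
    rw [NFA.evalFrom_cons, NFA.stepSet_singleton, NFA.mem_evalFrom_iff_exists]
    constructor
    · rintro (_ | ⟨ht, hp⟩)
      exact ⟨_, ht, ih.1 hp⟩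
    · rintro ⟨p, ht, hp⟩
      exact Path.cons ht (ih.2 hp)

lemma acceptsRef_iff_mem_accepts {A : VA α V Q} {w : List (Label α V)} :
    A.AcceptsRef w ↔ w ∈ A.toNFA.accepts := by
  simp [AcceptsRef, NFA.mem_accepts, toNFA, path_iff_mem_evalFrom]

lemma exists_acceptsRef_replicate_append [Fintype Q] {A : VA α V Q} {n : ℕ}
    (hn : Fintype.card (Set Q) ≤ n) {l : Label α V} {v : List (Label α V)}
    (h : A.AcceptsRef (List.replicate n l ++ v)) :
    ∃ k, 0 < k ∧ A.AcceptsRef (List.replicate k l ++ (List.replicate n l ++ v)) := by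
  rw [acceptsRef_iff_mem_accepts] at h
  obtain ⟨a, b, c, hw, hab, hb, hpump⟩ :=
    NFA.pumping_lemma h (by rw [List.length_append, List.length_replicate]; omega)
  have hpre : a ++ b <+: List.replicate n l := by
    refine List.prefix_of_prefix_length_le ⟨c, hw.symm⟩ (List.prefix_append _ v) ?_
    simp; omega
  obtain ⟨-, ha, hb'⟩ := List.append_eq_replicate_iff.1 (List.prefix_replicate_iff.1 hpre).2
  generalize a.length = i at ha
  generalize b.length = k at hb'
  subst ha hb'
  have hmem : List.replicate k l ++ (List.replicate n l ++ v) ∈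
      ({List.replicate i l} * KStar.kstar {List.replicate k l} * {c} : Language (Label α V)) := by
    have hloop : List.replicate k l ++ List.replicate k l ∈
        KStar.kstar ({List.replicate k l} : Language (Label α V)) := by
      simpa using
        Language.join_mem_kstar (L := [List.replicate k l, List.replicate k l]) (by simp; rfl)
    rw [hw, Language.mem_mul]
    refine ⟨_, Language.mem_mul.2 ⟨_, rfl, _, hloop, rfl⟩, c, rfl, ?_⟩
    simp only [← List.append_assoc, ← List.replicate_add]
    rw [Nat.add_left_comm]
  exact ⟨k, Nat.pos_of_ne_zero (by simpa using hb), acceptsRef_iff_mem_accepts.2 (hpump hmem)⟩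

end VA

def doc (i j : ℕ) : List Bool := List.replicate i false ++ true :: List.replicate j false

lemma doc_inj {i j i' j' : ℕ} : doc i j = doc i' j' ↔ i = i' ∧ j = j' := by
  refine ⟨fun h => ?_, fun ⟨hi, hj⟩ => hi ▸ hj ▸ rfl⟩
  have hi : i = i' := by
    simpa [doc, List.idxOf_append_of_notMem] using congrArg (List.idxOf true) h
  have hlen := congrArg List.length h
  simp only [doc, List.length_append, List.length_replicate, List.length_cons] at hlen
  exact ⟨hi, by omega⟩

lemma mem_stmt3Spanner_doc {i j : ℕ} {m : Mapping Unit} :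
    m ∈ stmt3Spanner (doc i j) ↔ m () = some (0, i) ∨ m () = some (i + 1, i + j + 1) := by
  refine ⟨fun ⟨i', j', hd, hm⟩ => ?_, fun hm => ⟨i, j, rfl, hm⟩⟩
  obtain ⟨rfl, rfl⟩ := doc_inj.1 hd
  exact hm

lemma suffix_mem_skyline_spanLen_iff {i j : ℕ} :
    (fun _ => some (i + 1, i + j + 1)) ∈
        skyline stmt3Spanner (fun _ => spanLenRel) (doc i j) ↔ i < j := by
  constructor
  · rintro ⟨-, hmax⟩
    by_contra hji
    refine hmax (fun _ => some (0, i)) (mem_stmt3Spanner_doc.2 (Or.inl rfl)) ?_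
      ⟨fun _ => iff_of_false (by simp) (by simp), ?_⟩
    · intro h
      have := congrFun h ()
      simp at this
    · rintro ⟨⟩ _ _ ⟨⟩ ⟨⟩
      simp only
      omega
  · refine fun hij => ⟨mem_stmt3Spanner_doc.2 (Or.inr rfl), fun m hm hne hdom => ?_⟩
    rcases mem_stmt3Spanner_doc.1 hm with hm | hm
    · have := hdom.2 () _ _ rfl hm
      simp only at this
      omega
    · exact hne (funext fun _ => hm)

/-- The skyline of this regular spanner under the span length
domination relation is not a regular spanner. -/
theorem skyline_spanLen_not_regular :
    ¬ IsRegular (skyline stmt3Spanner (fun _ => spanLenRel)) := by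
  rintro ⟨Q, _, A, -, hA⟩
  set N := Fintype.card (Set Q)
  obtain ⟨w, hw, hlet, hmap⟩ :
      (fun _ => some (N + 1, N + (N + 1) + 1)) ∈ A.spanner (doc N (N + 1)) := by
    rw [hA]
    exact suffix_mem_skyline_spanLen_iff.2 (Nat.lt_succ_self N)
  have hprefix : w = List.replicate N (Label.letter false) ++ w.drop N :=
    eq_replicate_letter_append_of_refMapping (congrFun hmap ()) (by omega) (by omega)
      (by simp [hlet, doc])
  obtain ⟨k, hk, hpumped⟩ := A.exists_acceptsRef_replicate_append le_rfl (hprefix ▸ hw)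
  rw [← hprefix] at hpumped
  have hmem : (fun _ => some (k + N + 1, k + N + (N + 1) + 1)) ∈
      skyline stmt3Spanner (fun _ => spanLenRel) (doc (k + N) (N + 1)) := by
    rw [← hA]
    rw [← List.map_replicate] at hpumped
    refine ⟨_, hpumped, ?_, ?_⟩
    · simp only [letters_append, letters_map_letter, hlet, doc, List.replicate_add,
        List.append_assoc]
    rw [refMapping_map_letter_append, hmap]
    funext
    simp only [Option.map_some, List.length_replicate]
    congr 2 <;> omega
  exact absurd (suffix_mem_skyline_spanLen_iff.1 hmem) (by omega)

end DocSpanners
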